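/- Let X be a measurable space equipped with a sigma-finite measure lambda, V : X -> [1,infinity) measurable, and let g be a balancing function that is twice differentiable and non-decreasing with g' and g'' bounded. Let q be a bounded positive proposal density, and let mu, nu be probability measures with everywhere positive bounded densities with respect to lambda satisfying ∫ V dmu < infinity and ∫ V dnu < infinity. Let rho be a probability measure with density such that sup_x rho(x)/mu(x)^2 < infinity and sup_x rho(x)/nu(x)^2 < infinity. Then, with P_mu, P_nu the Hastings kernels with invariant distributions mu, nu, one has: sup over measurable f with ||f||_V <= 1 of |P_mu(rho,f) - P_nu(rho,f)| is at most M_rho * ||mu - nu||_V, where M_rho := ∫_0^1 { ∫ sup_y [ (V(y)+V(z)) (rho(z)/mu_t(z)) q(y,z) g'(r_{mu_t}(z,y)) / V(y) ] lambda(dz) + ∫ sup_y [ (V(y)+V(z)) mu_t(z) q(z,y) g'(r_{mu_t}(y,z)) rho(y) / (mu_t(y)^2 V(y)) ] lambda(dz) } dt. -/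

import Mathlib

open MeasureTheory ProbabilityTheory ENNReal

/-- The Hastings ratio `r_μ(x,y) = μ(y)q(y,x) / (μ(x)q(x,y))` for a target density `p`. -/
noncomputable def hastingsRatio {X : Type*} (q : X → X → ℝ) (p : X → ℝ) (x y : X) : ℝ :=
  p y * q y x / (p x * q x y)

/-- The Hastings kernel with balancing function `g`, proposal density `q` and invariant
density `p`, applied to starting point `x` and test function `f`. -/
noncomputable def hastingsKernelFun {X : Type*} [MeasurableSpace X] (lam : Measure X)
    (g : ℝ → ℝ) (q : X → X → ℝ) (p : X → ℝ) (x : X) (f : X → ℝ) : ℝ :=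
  (∫ y, f y * g (hastingsRatio q p x y) * q x y ∂lam)
    + f x * (1 - ∫ y, g (hastingsRatio q p x y) * q x y ∂lam)

/-- The `V`-norm `‖μ - ν‖_V = sup { |∫ f dμ - ∫ f dν| : f measurable, ‖f‖_V ≤ 1 }`. -/
noncomputable def vDistE {X : Type*} [MeasurableSpace X] (V : X → ℝ) (μ ν : Measure X) :
    ℝ≥0∞ :=
  ⨆ f : {f : X → ℝ // Measurable f ∧ ∀ x, |f x| ≤ V x},
    ENNReal.ofReal |(∫ x, f.1 x ∂μ) - ∫ x, f.1 x ∂ν|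

open Set

/-!
Write `p_t = (1 - t) pμ + t pν` and `r_t` for the Hastings ratio of `p_t`. At each `x` the two
kernels differ by `∫ (f y - f x) (g (r_μ(x,y)) - g (r_ν(x,y))) q(x,y) λ(dy)`, with
`|f y - f x| ≤ V y + V x`. The fundamental theorem of calculus along `t ↦ g (r_t(x,y))` bounds
`|g (r_ν) - g (r_μ)|` by `∫₀¹ g'(r_t) |∂ₜ r_t| dt`, and `∂ₜ r_t(x,y)` is linear in the values of
`pν - pμ` at `y` and at `x`. After Tonelli, each of these two contributions factors as
`∫ V |pν - pμ| dλ` times the integral over the other point of a supremum; these are the two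
integrands of `M_ρ`. Finally `∫ V |pν - pμ| dλ` is attained in the `V`-norm by the test function
`± V`. The kernels are `ρ`-integrable because balance and `g ≤ 1` give `g u ≤ u`, whence
`g (r(x,y)) q(x,y) ≤ c p(y) / p(x)`, which `pρ ≤ c p²` compensates.
-/

lemma one_sub_mul_add_mul_pos {a b t : ℝ} (ha : 0 < a) (hb : 0 < b) (ht : t ∈ Icc (0 : ℝ) 1) :
    0 < (1 - t) * a + t * b := by
  simpa using convex_Ioi (0 : ℝ) ha hb (sub_nonneg.2 ht.2) ht.1 (by ring)

lemma ContinuousOn.measurable_comp {α β γ : Type*} [MeasurableSpace α] [TopologicalSpace β]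
    [MeasurableSpace β] [OpensMeasurableSpace β] [TopologicalSpace γ] [MeasurableSpace γ]
    [BorelSpace γ] {φ : β → γ} {s : Set β} (hφ : ContinuousOn φ s) {r : α → β}
    (hr : Measurable r) (hrs : ∀ a, r a ∈ s) : Measurable fun a => φ (r a) :=
  hφ.domRestrict.measurable.comp (hr.subtype_mk (h := hrs))

lemma ofReal_abs_sub_le_setLIntegral_of_hasDerivAt {φ φ' : ℝ → ℝ} {a b : ℝ} (hab : a ≤ b)
    (hφ : ∀ t ∈ Icc a b, HasDerivAt φ (φ' t) t) (hφ' : ContinuousOn φ' (Icc a b)) :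
    ENNReal.ofReal |φ b - φ a| ≤ ∫⁻ t in Icc a b, ENNReal.ofReal |φ' t| := by
  rw [← intervalIntegral.integral_eq_sub_of_hasDerivAt (by rwa [uIcc_of_le hab])
      (hφ'.intervalIntegrable_of_Icc hab), intervalIntegral.integral_of_le hab]
  simp only [← Real.enorm_eq_ofReal_abs]
  exact (enorm_integral_le_lintegral_enorm _).trans (lintegral_mono_set Ioc_subset_Icc_self)

lemma le_self_of_balancing {g : ℝ → ℝ} (hg1 : ∀ u, 0 < u → g u ≤ 1)
    (hbal : ∀ u, 0 < u → g u = u * g (1 / u)) {u : ℝ} (hu : 0 < u) : g u ≤ u := by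
  rw [hbal u hu]
  simpa using mul_le_mul_of_nonneg_left (hg1 _ (one_div_pos.2 hu)) hu.le

section Interpolation

variable {X : Type*}

noncomputable def mixDensity (pμ pν : X → ℝ) (t : ℝ) (w : X) : ℝ :=
  (1 - t) * pμ w + t * pν w

/-- A bound for `|∂ₜ r_t(x,y)|`, where `r_t` is the Hastings ratio of `mixDensity pμ pν t`. -/
noncomputable def ratioSlopeBound (q : X → X → ℝ) (pμ pν : X → ℝ) (t : ℝ) (x y : X) : ℝ :=
  (|pν y - pμ y| * mixDensity pμ pν t x + mixDensity pμ pν t y * |pν x - pμ x|) * q y x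
    / (mixDensity pμ pν t x ^ 2 * q x y)

@[simp]
lemma mixDensity_zero (pμ pν : X → ℝ) : mixDensity pμ pν 0 = pμ := by
  ext; simp [mixDensity]

@[simp]
lemma mixDensity_one (pμ pν : X → ℝ) : mixDensity pμ pν 1 = pν := by
  ext; simp [mixDensity]

lemma mixDensity_pos {pμ pν : X → ℝ} (hμ : ∀ w, 0 < pμ w) (hν : ∀ w, 0 < pν w) {t : ℝ}
    (ht : t ∈ Icc (0 : ℝ) 1) (w : X) : 0 < mixDensity pμ pν t w :=
  one_sub_mul_add_mul_pos (hμ w) (hν w) ht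

lemma hastingsRatio_pos {q : X → X → ℝ} {p : X → ℝ} (hq : ∀ x y, 0 < q x y)
    (hp : ∀ w, 0 < p w) (x y : X) : 0 < hastingsRatio q p x y :=
  div_pos (mul_pos (hp y) (hq y x)) (mul_pos (hp x) (hq x y))

lemma g_hastingsRatio_mul_le {g : ℝ → ℝ} (hgu : ∀ u, 0 < u → g u ≤ u) {q : X → X → ℝ}
    (hq : ∀ x y, 0 < q x y) {cq : ℝ} (hcq : ∀ x y, q x y ≤ cq) {p : X → ℝ} (hp : ∀ w, 0 < p w)
    (x y : X) :
    g (hastingsRatio q p x y) * q x y ≤ cq * p y / p x := calc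
  g (hastingsRatio q p x y) * q x y ≤ hastingsRatio q p x y * q x y :=
    mul_le_mul_of_nonneg_right (hgu _ (hastingsRatio_pos hq hp x y)) (hq x y).le
  _ = q y x * p y / p x := by
    unfold hastingsRatio; field_simp [(hq x y).ne', (hp x).ne']
  _ ≤ cq * p y / p x := by have := (hp y).le; have := (hp x).le; gcongr; exact hcq y x

lemma norm_mul_g_hastingsRatio_mul_le {g : ℝ → ℝ} (hg0 : ∀ u, 0 < u → 0 ≤ g u)
    (hgu : ∀ u, 0 < u → g u ≤ u) {q : X → X → ℝ} (hq : ∀ x y, 0 < q x y) {cq : ℝ}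
    (hcq : ∀ x y, q x y ≤ cq) {p : X → ℝ} (hp : ∀ w, 0 < p w) {V h : X → ℝ}
    (hhV : ∀ y, |h y| ≤ V y) (x y : X) :
    ‖h y * g (hastingsRatio q p x y) * q x y‖ ≤ V y * p y * (cq / p x) := by
  have hacc0 := mul_nonneg (hg0 _ (hastingsRatio_pos hq hp x y)) (hq x y).le
  rw [Real.norm_eq_abs, mul_assoc, abs_mul, abs_of_nonneg hacc0]
  calc |h y| * (g (hastingsRatio q p x y) * q x y) ≤ V y * (cq * p y / p x) :=
        mul_le_mul (hhV y) (g_hastingsRatio_mul_le hgu hq hcq hp x y) hacc0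
          ((abs_nonneg _).trans (hhV y))
    _ = V y * p y * (cq / p x) := by ring

lemma hasDerivAt_hastingsRatio_mixDensity {q : X → X → ℝ} {pμ pν : X → ℝ} {x y : X} {t : ℝ}
    (hpt : mixDensity pμ pν t x ≠ 0) (hq : q x y ≠ 0) :
    HasDerivAt (fun s => hastingsRatio q (mixDensity pμ pν s) x y)
      (((pν y - pμ y) * mixDensity pμ pν t x - mixDensity pμ pν t y * (pν x - pμ x)) * q y x
        / (mixDensity pμ pν t x ^ 2 * q x y)) t := by
  have hmix : ∀ w, HasDerivAt (fun s => mixDensity pμ pν s w) (pν w - pμ w) t := fun w =>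
    ((((hasDerivAt_id t).const_sub 1).mul_const (pμ w)).add
      ((hasDerivAt_id t).mul_const (pν w))).congr_deriv (by ring)
  exact (((hmix y).mul_const (q y x)).div ((hmix x).mul_const (q x y))
    (mul_ne_zero hpt hq)).congr_deriv (by field_simp)

lemma ofReal_abs_sub_le_setLIntegral_ratioSlopeBound {g g' : ℝ → ℝ}
    (hg : ∀ u, 0 < u → HasDerivAt g (g' u) u) (hg'c : ContinuousOn g' (Ioi 0))
    (hg'0 : ∀ u, 0 < u → 0 ≤ g' u) {q : X → X → ℝ} (hq : ∀ x y, 0 < q x y)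
    {pμ pν : X → ℝ} (hμ : ∀ w, 0 < pμ w) (hν : ∀ w, 0 < pν w) (x y : X) :
    ENNReal.ofReal |g (hastingsRatio q pν x y) - g (hastingsRatio q pμ x y)|
      ≤ ∫⁻ t in Icc (0 : ℝ) 1, ENNReal.ofReal
          (g' (hastingsRatio q (mixDensity pμ pν t) x y) * ratioSlopeBound q pμ pν t x y) := by
  set r := fun t => hastingsRatio q (mixDensity pμ pν t) x y
  set r' := fun t => ((pν y - pμ y) * mixDensity pμ pν t x
    - mixDensity pμ pν t y * (pν x - pμ x)) * q y x / (mixDensity pμ pν t x ^ 2 * q x y)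
  have hpt : ∀ t ∈ Icc (0 : ℝ) 1, ∀ w, 0 < mixDensity pμ pν t w := fun t ht =>
    mixDensity_pos hμ hν ht
  have hr : ∀ t ∈ Icc (0 : ℝ) 1, HasDerivAt r (r' t) t := fun t ht =>
    hasDerivAt_hastingsRatio_mixDensity (hpt t ht x).ne' (hq x y).ne'
  have hr'c : ContinuousOn r' (Icc 0 1) := by
    exact ContinuousOn.div (by unfold mixDensity; fun_prop) (by unfold mixDensity; fun_prop)
      fun t ht => (mul_pos (pow_pos (hpt t ht x) 2) (hq x y)).ne'
  have hrc : ContinuousOn r (Icc 0 1) := fun t ht => (hr t ht).continuousAt.continuousWithinAt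
  have hr0 : r 0 = hastingsRatio q pμ x y := by simp [r]
  have hr1 : r 1 = hastingsRatio q pν x y := by simp [r]
  have hrpos : ∀ t ∈ Icc (0 : ℝ) 1, 0 < r t := fun t ht => hastingsRatio_pos hq (hpt t ht) x y
  rw [← hr0, ← hr1]
  refine (ofReal_abs_sub_le_setLIntegral_of_hasDerivAt zero_le_one
    (fun t ht => (hg (r t) (hrpos t ht)).comp t (hr t ht))
    ((hg'c.comp hrc hrpos).mul hr'c)).trans
    (setLIntegral_mono' measurableSet_Icc fun t ht => ENNReal.ofReal_le_ofReal ?_)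
  rw [abs_mul, abs_of_nonneg (hg'0 _ (hrpos t ht))]
  refine mul_le_mul_of_nonneg_left ?_ (hg'0 _ (hrpos t ht))
  have hden : 0 < mixDensity pμ pν t x ^ 2 * q x y := mul_pos (pow_pos (hpt t ht x) 2) (hq x y)
  simp only [r', ratioSlopeBound, abs_div, abs_mul, abs_of_pos hden, abs_of_pos (hq y x)]
  have hnum : |(pν y - pμ y) * mixDensity pμ pν t x - mixDensity pμ pν t y * (pν x - pμ x)|
      ≤ |pν y - pμ y| * mixDensity pμ pν t x + mixDensity pμ pν t y * |pν x - pμ x| := by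
    refine (abs_sub _ _).trans_eq ?_
    rw [abs_mul, abs_mul, abs_of_pos (hpt t ht x), abs_of_pos (hpt t ht y)]
  have := (hq y x).le
  gcongr

noncomputable def meanValueIntegrand (V : X → ℝ) (q : X → X → ℝ) (g' : ℝ → ℝ)
    (pρ pμ pν : X → ℝ) (t : ℝ) (x y : X) : ℝ≥0∞ :=
  ENNReal.ofReal (pρ x) * (ENNReal.ofReal ((V y + V x) * q x y) *
    ENNReal.ofReal (g' (hastingsRatio q (mixDensity pμ pν t) x y) * ratioSlopeBound q pμ pν t x y))

/- The two integrands of `M_ρ` (`z` is integrated, `y` is the supremum variable). For a move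
`x → y`, the first carries the perturbation `pν - pμ` at the proposed point, the second the one at
the current point. -/
noncomputable def proposalSensitivity (V : X → ℝ) (q : X → X → ℝ) (g' : ℝ → ℝ)
    (pρ pμ pν : X → ℝ) (t : ℝ) (z y : X) : ℝ :=
  (V y + V z) * (pρ z / mixDensity pμ pν t z) * q y z *
    g' (hastingsRatio q (mixDensity pμ pν t) z y) / V y

noncomputable def currentSensitivity (V : X → ℝ) (q : X → X → ℝ) (g' : ℝ → ℝ)
    (pρ pμ pν : X → ℝ) (t : ℝ) (z y : X) : ℝ :=
  (V y + V z) * mixDensity pμ pν t z * q z y *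
    g' (hastingsRatio q (mixDensity pμ pν t) y z) * pρ y / (mixDensity pμ pν t y ^ 2 * V y)

lemma meanValueIntegrand_congr {V : X → ℝ} {q : X → X → ℝ} {g'₁ g'₂ : ℝ → ℝ}
    (hg' : EqOn g'₁ g'₂ (Ioi 0)) (hq : ∀ x y, 0 < q x y) {pρ pμ pν : X → ℝ}
    (hμ : ∀ w, 0 < pμ w) (hν : ∀ w, 0 < pν w) {t : ℝ} (ht : t ∈ Icc (0 : ℝ) 1) :
    meanValueIntegrand V q g'₁ pρ pμ pν t = meanValueIntegrand V q g'₂ pρ pμ pν t := by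
  ext x y
  rw [meanValueIntegrand, meanValueIntegrand,
    hg' (hastingsRatio_pos hq (mixDensity_pos hμ hν ht) x y)]

lemma meanValueIntegrand_eq_add {V : X → ℝ} (hV1 : ∀ w, 1 ≤ V w) {q : X → X → ℝ}
    (hq : ∀ x y, 0 < q x y) {g' : ℝ → ℝ} (hg'0 : ∀ u, 0 < u → 0 ≤ g' u) {pρ pμ pν : X → ℝ}
    (hρ0 : ∀ w, 0 ≤ pρ w) (hμ : ∀ w, 0 < pμ w) (hν : ∀ w, 0 < pν w) {t : ℝ}
    (ht : t ∈ Icc (0 : ℝ) 1) (x y : X) :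
    meanValueIntegrand V q g' pρ pμ pν t x y
      = ENNReal.ofReal (V y * |pν y - pμ y|)
          * ENNReal.ofReal (proposalSensitivity V q g' pρ pμ pν t x y)
        + ENNReal.ofReal (V x * |pν x - pμ x|)
          * ENNReal.ofReal (currentSensitivity V q g' pρ pμ pν t y x) := by
  have hpt := mixDensity_pos hμ hν ht
  have hV0 : ∀ w, 0 < V w := fun w => zero_lt_one.trans_le (hV1 w)
  have hg'xy := hg'0 _ (hastingsRatio_pos hq hpt x y)
  have hq0 := hq x y
  have hqyx := (hq y x).le
  have hρx := hρ0 x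
  have hpx := hpt x
  have hpy := (hpt y).le
  have hVx := hV0 x
  have hVy := hV0 y
  have hS : 0 ≤ ratioSlopeBound q pμ pν t x y := by unfold ratioSlopeBound; positivity
  have hP : 0 ≤ proposalSensitivity V q g' pρ pμ pν t x y := by
    unfold proposalSensitivity; positivity
  have hC : 0 ≤ currentSensitivity V q g' pρ pμ pν t y x := by
    unfold currentSensitivity; positivity
  rw [meanValueIntegrand, ← ENNReal.ofReal_mul (by positivity), ← ENNReal.ofReal_mul hρx,
    ← ENNReal.ofReal_mul (by positivity), ← ENNReal.ofReal_mul (by positivity),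
    ← ENNReal.ofReal_add (by positivity) (by positivity)]
  congr 1
  unfold proposalSensitivity currentSensitivity ratioSlopeBound
  field_simp
  ring

end Interpolation

section Measurability

variable {X : Type*} [MeasurableSpace X]

lemma measurable_hastingsRatio {q : X → X → ℝ} {p : X → ℝ}
    (hq : Measurable (Function.uncurry q)) (hp : Measurable p) :
    Measurable fun z : X × X => hastingsRatio q p z.1 z.2 :=
  ((hp.comp measurable_snd).mul (hq.comp measurable_swap)).div
    ((hp.comp measurable_fst).mul hq)

lemma measurable_mixDensity {pμ pν : X → ℝ} (hμ : Measurable pμ) (hν : Measurable pν) :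
    Measurable fun w : ℝ × X => mixDensity pμ pν w.1 w.2 := by
  unfold mixDensity; fun_prop

lemma measurable_meanValueIntegrand {V : X → ℝ} (hV : Measurable V) {q : X → X → ℝ}
    (hqm : Measurable (Function.uncurry q)) {g' : ℝ → ℝ} (hg' : Measurable g')
    {pρ pμ pν : X → ℝ} (hρ : Measurable pρ) (hμ : Measurable pμ) (hν : Measurable pν) :
    Measurable fun w : ℝ × X × X => meanValueIntegrand V q g' pρ pμ pν w.1 w.2.1 w.2.2 := by
  have hp := measurable_mixDensity hμ hν
  have hpx : Measurable fun w : ℝ × X × X => mixDensity pμ pν w.1 w.2.1 :=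
    hp.comp (measurable_fst.prodMk (measurable_fst.comp measurable_snd))
  have hpy : Measurable fun w : ℝ × X × X => mixDensity pμ pν w.1 w.2.2 :=
    hp.comp (measurable_fst.prodMk (measurable_snd.comp measurable_snd))
  have hqxy : Measurable fun w : ℝ × X × X => q w.2.1 w.2.2 := hqm.comp measurable_snd
  have hqyx : Measurable fun w : ℝ × X × X => q w.2.2 w.2.1 :=
    hqm.comp (measurable_swap.comp measurable_snd)
  unfold meanValueIntegrand ratioSlopeBound hastingsRatio
  fun_prop

end Measurability

section Kernel

variable {X : Type*} [MeasurableSpace X] {lam : Measure X} {g : ℝ → ℝ} {q : X → X → ℝ}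
  {V p : X → ℝ}

lemma integral_g_hastingsRatio_mul_mem_Icc (hg0 : ∀ u, 0 < u → 0 ≤ g u)
    (hg1 : ∀ u, 0 < u → g u ≤ 1) (hq : ∀ x y, 0 < q x y) (hqint : ∀ x, ∫ y, q x y ∂lam = 1)
    (hp : ∀ w, 0 < p w) (x : X) :
    ∫ y, g (hastingsRatio q p x y) * q x y ∂lam ∈ Icc (0 : ℝ) 1 := by
  have hgq0 : ∀ y, 0 ≤ g (hastingsRatio q p x y) * q x y := fun y =>
    mul_nonneg (hg0 _ (hastingsRatio_pos hq hp x y)) (hq x y).le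
  refine ⟨integral_nonneg hgq0, (hqint x).symm ▸ integral_mono_of_nonneg (ae_of_all _ hgq0)
    (Integrable.of_integral_ne_zero (by simp [hqint x])) (ae_of_all _ fun y => ?_)⟩
  simpa using mul_le_mul_of_nonneg_right (hg1 _ (hastingsRatio_pos hq hp x y)) (hq x y).le

lemma measurable_g_hastingsRatio (hgc : ContinuousOn g (Ioi 0))
    (hqm : Measurable (Function.uncurry q)) (hq : ∀ x y, 0 < q x y) (hpm : Measurable p)
    (hp : ∀ w, 0 < p w) : Measurable fun z : X × X => g (hastingsRatio q p z.1 z.2) :=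
  hgc.measurable_comp (measurable_hastingsRatio hqm hpm) fun z => hastingsRatio_pos hq hp z.1 z.2

lemma integrable_mul_g_hastingsRatio_mul (hgc : ContinuousOn g (Ioi 0))
    (hg0 : ∀ u, 0 < u → 0 ≤ g u) (hgu : ∀ u, 0 < u → g u ≤ u)
    (hqm : Measurable (Function.uncurry q)) (hq : ∀ x y, 0 < q x y) {cq : ℝ}
    (hcq : ∀ x y, q x y ≤ cq) (hpm : Measurable p) (hp : ∀ w, 0 < p w)
    (hVp : Integrable (fun w => V w * p w) lam) {h : X → ℝ} (hhm : Measurable h)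
    (hhV : ∀ y, |h y| ≤ V y) (x : X) :
    Integrable (fun y => h y * g (hastingsRatio q p x y) * q x y) lam := by
  refine (hVp.mul_const _).mono' ?_
    (ae_of_all _ (norm_mul_g_hastingsRatio_mul_le hg0 hgu hq hcq hp hhV x))
  exact (hhm.mul ((measurable_g_hastingsRatio hgc hqm hq hpm hp).comp measurable_prodMk_left)
    |>.mul (hqm.comp measurable_prodMk_left)).aestronglyMeasurable

lemma abs_hastingsKernelFun_le (hg0 : ∀ u, 0 < u → 0 ≤ g u) (hg1 : ∀ u, 0 < u → g u ≤ 1)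
    (hgu : ∀ u, 0 < u → g u ≤ u) (hq : ∀ x y, 0 < q x y) {cq : ℝ} (hcq : ∀ x y, q x y ≤ cq)
    (hqint : ∀ x, ∫ y, q x y ∂lam = 1) (hp : ∀ w, 0 < p w)
    (hVp : Integrable (fun w => V w * p w) lam) {f : X → ℝ} (hfV : ∀ y, |f y| ≤ V y) (x : X) :
    |hastingsKernelFun lam g q p x f| ≤ cq * (∫ w, V w * p w ∂lam) / p x + V x := by
  have hacc := integral_g_hastingsRatio_mul_mem_Icc hg0 hg1 hq hqint hp x
  have hmove : |∫ y, f y * g (hastingsRatio q p x y) * q x y ∂lam|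
      ≤ cq * (∫ w, V w * p w ∂lam) / p x := by
    refine (norm_integral_le_of_norm_le (hVp.mul_const _)
      (ae_of_all _ (norm_mul_g_hastingsRatio_mul_le hg0 hgu hq hcq hp hfV x))).trans_eq ?_
    rw [integral_mul_const]; ring
  have hstay : |f x * (1 - ∫ y, g (hastingsRatio q p x y) * q x y ∂lam)| ≤ V x := by
    rw [abs_mul]
    exact (mul_le_of_le_one_right (abs_nonneg _)
      (abs_le.2 ⟨by linarith [hacc.2], by linarith [hacc.1]⟩)).trans (hfV x)
  exact (abs_add_le _ _).trans (add_le_add hmove hstay)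

lemma stronglyMeasurable_hastingsKernelFun [SFinite lam] (hgc : ContinuousOn g (Ioi 0))
    (hqm : Measurable (Function.uncurry q)) (hq : ∀ x y, 0 < q x y) (hpm : Measurable p)
    (hp : ∀ w, 0 < p w) {f : X → ℝ} (hf : Measurable f) :
    StronglyMeasurable fun x => hastingsKernelFun lam g q p x f := by
  have hacc := (measurable_g_hastingsRatio hgc hqm hq hpm hp).mul hqm
  exact (((hf.comp measurable_snd).mul (measurable_g_hastingsRatio hgc hqm hq hpm hp)).mul
    hqm).stronglyMeasurable.integral_prod_right'.add
    (hf.stronglyMeasurable.mul (stronglyMeasurable_const.sub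
      hacc.stronglyMeasurable.integral_prod_right'))

lemma integrable_mul_hastingsKernelFun [SFinite lam] (hgc : ContinuousOn g (Ioi 0))
    (hg0 : ∀ u, 0 < u → 0 ≤ g u) (hg1 : ∀ u, 0 < u → g u ≤ 1) (hgu : ∀ u, 0 < u → g u ≤ u)
    (hqm : Measurable (Function.uncurry q)) (hq : ∀ x y, 0 < q x y) {cq : ℝ}
    (hcq : ∀ x y, q x y ≤ cq) (hqint : ∀ x, ∫ y, q x y ∂lam = 1) (hpm : Measurable p)
    (hp : ∀ w, 0 < p w) {cp : ℝ} (hcp : ∀ w, p w ≤ cp) (hV1 : ∀ w, 1 ≤ V w)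
    (hVp : Integrable (fun w => V w * p w) lam) {pρ : X → ℝ} (hρm : Measurable pρ)
    (hρ0 : ∀ w, 0 ≤ pρ w) {c : ℝ} (hρ : ∀ w, pρ w ≤ c * p w ^ 2) {f : X → ℝ}
    (hf : Measurable f) (hfV : ∀ y, |f y| ≤ V y) :
    Integrable (fun x => pρ x * hastingsKernelFun lam g q p x f) lam := by
  set I := ∫ w, V w * p w ∂lam
  have hp_int : Integrable p lam := hVp.mono' hpm.aestronglyMeasurable (ae_of_all _ fun w => by
    rw [Real.norm_eq_abs, abs_of_pos (hp w)]; nlinarith [hV1 w, hp w])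
  refine ((hp_int.const_mul (c * cq * I)).add (hVp.const_mul (c * cp))).mono'
    (hρm.aestronglyMeasurable.mul
      (stronglyMeasurable_hastingsKernelFun hgc hqm hq hpm hp hf).aestronglyMeasurable)
    (ae_of_all _ fun x => ?_)
  have hK := abs_hastingsKernelFun_le hg0 hg1 hgu hq hcq hqint hp hVp hfV x
  have hc : 0 ≤ c := nonneg_of_mul_nonneg_left ((hρ0 x).trans (hρ x)) (pow_pos (hp x) 2)
  have hcq0 : 0 ≤ cq := (hq x x).le.trans (hcq x x)
  have hI : 0 ≤ I := integral_nonneg fun w => mul_nonneg (zero_le_one.trans (hV1 w)) (hp w).le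
  have hV0 := zero_le_one.trans (hV1 x)
  have hpx := hp x
  rw [Real.norm_eq_abs, abs_mul, abs_of_nonneg (hρ0 x)]
  calc pρ x * |hastingsKernelFun lam g q p x f| ≤ c * p x ^ 2 * (cq * I / p x + V x) :=
        mul_le_mul (hρ x) hK (abs_nonneg _) (by positivity)
    _ = c * cq * I * p x + c * (p x * (V x * p x)) := by field_simp
    _ ≤ c * cq * I * p x + c * cp * (V x * p x) := by rw [mul_assoc c cp]; gcongr; exact hcp x

lemma hastingsKernelFun_sub_hastingsKernelFun {pμ pν f : X → ℝ} {x : X}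
    (hμf : Integrable (fun y => f y * g (hastingsRatio q pμ x y) * q x y) lam)
    (hνf : Integrable (fun y => f y * g (hastingsRatio q pν x y) * q x y) lam)
    (hμ1 : Integrable (fun y => g (hastingsRatio q pμ x y) * q x y) lam)
    (hν1 : Integrable (fun y => g (hastingsRatio q pν x y) * q x y) lam) :
    hastingsKernelFun lam g q pμ x f - hastingsKernelFun lam g q pν x f
      = ∫ y, (f y - f x) * (g (hastingsRatio q pμ x y) - g (hastingsRatio q pν x y)) * q x y
          ∂lam := by
  calc hastingsKernelFun lam g q pμ x f - hastingsKernelFun lam g q pν x f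
        = ((∫ y, f y * g (hastingsRatio q pμ x y) * q x y ∂lam)
            - ∫ y, f y * g (hastingsRatio q pν x y) * q x y ∂lam)
          - f x * ((∫ y, g (hastingsRatio q pμ x y) * q x y ∂lam)
            - ∫ y, g (hastingsRatio q pν x y) * q x y ∂lam) := by
        unfold hastingsKernelFun; ring
    _ = _ := by
      rw [← integral_sub hμf hνf, ← integral_sub hμ1 hν1, ← integral_const_mul]
      refine (integral_sub (hμf.sub hνf) ((hμ1.sub hν1).const_mul (f x))).symm.trans ?_
      congr 1 with y
      simp only [Pi.sub_apply]
      ring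

lemma ofReal_abs_hastingsKernelFun_sub_le {pμ pν f : X → ℝ} (hq : ∀ x y, 0 < q x y)
    (hfV : ∀ y, |f y| ≤ V y) {x : X}
    (hμf : Integrable (fun y => f y * g (hastingsRatio q pμ x y) * q x y) lam)
    (hνf : Integrable (fun y => f y * g (hastingsRatio q pν x y) * q x y) lam)
    (hμ1 : Integrable (fun y => g (hastingsRatio q pμ x y) * q x y) lam)
    (hν1 : Integrable (fun y => g (hastingsRatio q pν x y) * q x y) lam) :
    ENNReal.ofReal |hastingsKernelFun lam g q pμ x f - hastingsKernelFun lam g q pν x f|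
      ≤ ∫⁻ y, ENNReal.ofReal ((V y + V x) * q x y)
          * ENNReal.ofReal |g (hastingsRatio q pν x y) - g (hastingsRatio q pμ x y)| ∂lam := by
  rw [hastingsKernelFun_sub_hastingsKernelFun hμf hνf hμ1 hν1, ← Real.enorm_eq_ofReal_abs]
  refine (enorm_integral_le_lintegral_enorm _).trans (lintegral_mono fun y => ?_)
  have hfxy : |f y - f x| ≤ V y + V x := (abs_sub _ _).trans (add_le_add (hfV y) (hfV x))
  rw [Real.enorm_eq_ofReal_abs, ← ENNReal.ofReal_mul
    (mul_nonneg ((abs_nonneg _).trans hfxy) (hq x y).le), abs_sub_comm (g _)]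
  refine ENNReal.ofReal_le_ofReal ?_
  rw [abs_mul, abs_mul, abs_of_pos (hq x y), mul_right_comm]
  exact mul_le_mul_of_nonneg_right (mul_le_mul_of_nonneg_right hfxy (hq x y).le) (abs_nonneg _)

lemma integral_withDensity_ofReal (hpm : Measurable p) (hp : ∀ x, 0 ≤ p x)
    (h : X → ℝ) :
    ∫ x, h x ∂(lam.withDensity fun x => ENNReal.ofReal (p x)) = ∫ x, p x * h x ∂lam := by
  rw [integral_withDensity_eq_integral_toReal_smul hpm.ennreal_ofReal
    (ae_of_all _ fun _ => ENNReal.ofReal_lt_top)]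
  simp only [ENNReal.toReal_ofReal (hp _), smul_eq_mul]

lemma ofReal_abs_integral_sub_le_lintegral {pρ : X → ℝ} (hρm : Measurable pρ)
    (hρ0 : ∀ x, 0 ≤ pρ x) {F G : X → ℝ} (hF : Integrable (fun x => pρ x * F x) lam)
    (hG : Integrable (fun x => pρ x * G x) lam) :
    ENNReal.ofReal |(∫ x, F x ∂(lam.withDensity fun x => ENNReal.ofReal (pρ x)))
        - ∫ x, G x ∂(lam.withDensity fun x => ENNReal.ofReal (pρ x))|
      ≤ ∫⁻ x, ENNReal.ofReal (pρ x) * ENNReal.ofReal |F x - G x| ∂lam := by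
  rw [integral_withDensity_ofReal hρm hρ0, integral_withDensity_ofReal hρm hρ0,
    ← integral_sub hF hG, ← Real.enorm_eq_ofReal_abs]
  refine (enorm_integral_le_lintegral_enorm _).trans_eq (lintegral_congr fun x => ?_)
  rw [← mul_sub, Real.enorm_eq_ofReal_abs, abs_mul, abs_of_nonneg (hρ0 x),
    ENNReal.ofReal_mul (hρ0 x)]

end Kernel

section Bound

variable {X : Type*} [MeasurableSpace X] {lam : Measure X}

lemma lintegral_lintegral_setLIntegral_swap_of_eqOn [SFinite lam] {s : Set ℝ}
    (hs : MeasurableSet s) {F G : ℝ → X → X → ℝ≥0∞}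
    (hG : Measurable fun w : ℝ × X × X => G w.1 w.2.1 w.2.2) (hFG : ∀ t ∈ s, F t = G t) :
    ∫⁻ x, ∫⁻ y, ∫⁻ t in s, F t x y ∂volume ∂lam ∂lam
      = ∫⁻ t in s, ∫⁻ x, ∫⁻ y, F t x y ∂lam ∂lam := by
  have hF : ∀ x y, ∫⁻ t in s, F t x y = ∫⁻ t in s, G t x y := fun x y =>
    setLIntegral_congr_fun hs fun t ht => by rw [hFG t ht]
  simp only [hF]
  rw [setLIntegral_congr_fun hs fun t ht => by rw [hFG t ht]]
  have hswap : ∀ x, ∫⁻ y, ∫⁻ t in s, G t x y ∂volume ∂lam = ∫⁻ t in s, ∫⁻ y, G t x y ∂lam :=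
    fun x => lintegral_lintegral_swap (hG.comp
      ((measurable_snd.prodMk (measurable_const.prodMk measurable_fst)))).aemeasurable
  simp only [hswap]
  exact lintegral_lintegral_swap (Measurable.lintegral_prod_right'
    (f := fun w : (X × ℝ) × X => G w.1.2 w.1.1 w.2)
    (hG.comp ((measurable_snd.comp measurable_fst).prodMk
      ((measurable_fst.comp measurable_fst).prodMk measurable_snd)))).aemeasurable

lemma lintegral_lintegral_mul_le_mul_lintegral_iSup {w : X → ℝ≥0∞} (hw : Measurable w)
    (hw_top : ∀ x, w x ≠ ∞) (K : X → X → ℝ≥0∞) :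
    ∫⁻ x, ∫⁻ z, w x * K z x ∂lam ∂lam ≤ (∫⁻ x, w x ∂lam) * ∫⁻ z, ⨆ y, K z y ∂lam := calc
  ∫⁻ x, ∫⁻ z, w x * K z x ∂lam ∂lam = ∫⁻ x, w x * ∫⁻ z, K z x ∂lam ∂lam :=
    lintegral_congr fun x => lintegral_const_mul' _ _ (hw_top x)
  _ ≤ ∫⁻ x, w x * ∫⁻ z, ⨆ y, K z y ∂lam ∂lam := by
    gcongr with x z
    exact le_iSup (K z) x
  _ = (∫⁻ x, w x ∂lam) * ∫⁻ z, ⨆ y, K z y ∂lam := lintegral_mul_const _ hw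

lemma lintegral_lintegral_add_le_mul [SFinite lam] {w : X → ℝ≥0∞} (hw : Measurable w)
    (hw_top : ∀ x, w x ≠ ∞) {K L : X → X → ℝ≥0∞} (hK : Measurable fun z : X × X => K z.1 z.2) :
    ∫⁻ x, ∫⁻ y, w y * K x y + w x * L y x ∂lam ∂lam
      ≤ (∫⁻ x, w x ∂lam) * ((∫⁻ z, ⨆ y, K z y ∂lam) + ∫⁻ z, ⨆ y, L z y ∂lam) := by
  have hwK : Measurable fun z : X × X => w z.2 * K z.1 z.2 := (hw.comp measurable_snd).mul hK
  calc ∫⁻ x, ∫⁻ y, w y * K x y + w x * L y x ∂lam ∂lam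
      = ∫⁻ y, ∫⁻ x, w y * K x y ∂lam ∂lam + ∫⁻ x, ∫⁻ y, w x * L y x ∂lam ∂lam := by
        rw [← lintegral_lintegral_swap (f := fun x y => w y * K x y) hwK.aemeasurable,
          ← lintegral_add_left hwK.lintegral_prod_right']
        exact lintegral_congr fun x => lintegral_add_left (hwK.comp measurable_prodMk_left) _
    _ ≤ _ := by
      rw [mul_add]
      exact add_le_add (lintegral_lintegral_mul_le_mul_lintegral_iSup hw hw_top K)
        (lintegral_lintegral_mul_le_mul_lintegral_iSup hw hw_top L)

lemma integrable_mul_abs_sub {V pμ pν : X → ℝ} (hVm : Measurable V) (hV0 : ∀ w, 0 ≤ V w)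
    (hμm : Measurable pμ) (hμ0 : ∀ w, 0 ≤ pμ w) (hνm : Measurable pν) (hν0 : ∀ w, 0 ≤ pν w)
    (hVμ : Integrable (fun w => V w * pμ w) lam) (hVν : Integrable (fun w => V w * pν w) lam) :
    Integrable (fun w => V w * |pν w - pμ w|) lam := by
  refine (hVμ.add hVν).mono' (by fun_prop) (ae_of_all _ fun w => ?_)
  rw [Real.norm_eq_abs, abs_of_nonneg (mul_nonneg (hV0 w) (abs_nonneg _)), Pi.add_apply,
    ← mul_add]
  have := hV0 w
  gcongr
  exact (abs_sub _ _).trans (by rw [abs_of_nonneg (hν0 w), abs_of_nonneg (hμ0 w), add_comm])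

lemma lintegral_mul_abs_sub_le_vDistE {V pμ pν : X → ℝ} (hVm : Measurable V)
    (hV0 : ∀ w, 0 ≤ V w) (hμm : Measurable pμ) (hμ0 : ∀ w, 0 ≤ pμ w) (hνm : Measurable pν)
    (hν0 : ∀ w, 0 ≤ pν w) (hVμ : Integrable (fun w => V w * pμ w) lam)
    (hVν : Integrable (fun w => V w * pν w) lam) :
    ∫⁻ w, ENNReal.ofReal (V w * |pν w - pμ w|) ∂lam
      ≤ vDistE V (lam.withDensity fun x => ENNReal.ofReal (pμ x))
          (lam.withDensity fun x => ENNReal.ofReal (pν x)) := by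
  classical
  set f₀ : X → ℝ := fun w => if pν w ≤ pμ w then V w else -V w
  have hf₀m : Measurable f₀ := Measurable.ite (measurableSet_le hνm hμm) hVm hVm.neg
  have hf₀V : ∀ w, |f₀ w| ≤ V w := fun w => by
    simp only [f₀]; split_ifs <;> simp [abs_of_nonneg (hV0 w)]
  have hf₀ : ∀ w, pμ w * f₀ w - pν w * f₀ w = V w * |pν w - pμ w| := fun w => by
    simp only [f₀]; split_ifs with h
    · rw [abs_of_nonpos (by linarith)]; ring
    · rw [abs_of_pos (by linarith)]; ring
  have hint : ∀ p : X → ℝ, Measurable p → (∀ w, 0 ≤ p w) → Integrable (fun w => V w * p w) lam →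
      Integrable (fun w => p w * f₀ w) lam := fun p hpm hp0 hVp =>
    hVp.mono' (by fun_prop) (ae_of_all _ fun w => by
      rw [Real.norm_eq_abs, abs_mul, abs_of_nonneg (hp0 w), mul_comm]
      exact mul_le_mul_of_nonneg_right (hf₀V w) (hp0 w))
  have hIμ := hint pμ hμm hμ0 hVμ
  have hIν := hint pν hνm hν0 hVν
  calc ∫⁻ w, ENNReal.ofReal (V w * |pν w - pμ w|) ∂lam
      = ENNReal.ofReal (∫ w, pμ w * f₀ w - pν w * f₀ w ∂lam) := by
        simp only [hf₀]
        exact (ofReal_integral_eq_lintegral_ofReal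
          (integrable_mul_abs_sub hVm hV0 hμm hμ0 hνm hν0 hVμ hVν)
          (ae_of_all _ fun w => mul_nonneg (hV0 w) (abs_nonneg _))).symm
    _ ≤ ENNReal.ofReal |(∫ x, f₀ x ∂(lam.withDensity fun x => ENNReal.ofReal (pμ x)))
          - ∫ x, f₀ x ∂(lam.withDensity fun x => ENNReal.ofReal (pν x))| := by
        rw [integral_withDensity_ofReal hμm hμ0, integral_withDensity_ofReal hνm hν0,
          integral_sub hIμ hIν]
        exact ENNReal.ofReal_le_ofReal (le_abs_self _)
    _ ≤ _ := le_iSup_of_le (⟨f₀, hf₀m, hf₀V⟩ : {f : X → ℝ // Measurable f ∧ ∀ x, |f x| ≤ V x})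
          le_rfl

lemma lintegral_lintegral_meanValueIntegrand_le [SFinite lam] {V : X → ℝ} (hVm : Measurable V)
    (hV1 : ∀ w, 1 ≤ V w) {q : X → X → ℝ} (hqm : Measurable (Function.uncurry q))
    (hq : ∀ x y, 0 < q x y) {g' : ℝ → ℝ} (hg'c : ContinuousOn g' (Ioi 0))
    (hg'0 : ∀ u, 0 < u → 0 ≤ g' u) {pρ pμ pν : X → ℝ} (hρm : Measurable pρ)
    (hρ0 : ∀ w, 0 ≤ pρ w) (hμm : Measurable pμ) (hμ : ∀ w, 0 < pμ w) (hνm : Measurable pν)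
    (hν : ∀ w, 0 < pν w) {t : ℝ} (ht : t ∈ Icc (0 : ℝ) 1) :
    ∫⁻ x, ∫⁻ y, meanValueIntegrand V q g' pρ pμ pν t x y ∂lam ∂lam
      ≤ ((∫⁻ z, ⨆ y, ENNReal.ofReal (proposalSensitivity V q g' pρ pμ pν t z y) ∂lam)
          + ∫⁻ z, ⨆ y, ENNReal.ofReal (currentSensitivity V q g' pρ pμ pν t z y) ∂lam)
        * ∫⁻ w, ENNReal.ofReal (V w * |pν w - pμ w|) ∂lam := by
  have hW : Measurable fun w => ENNReal.ofReal (V w * |pν w - pμ w|) := by fun_prop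
  have hr : Measurable fun z : X × X => g' (hastingsRatio q (mixDensity pμ pν t) z.1 z.2) :=
    measurable_g_hastingsRatio hg'c hqm hq
      ((measurable_mixDensity hμm hνm).comp measurable_prodMk_left) (mixDensity_pos hμ hν ht)
  have hpt : Measurable (mixDensity pμ pν t) :=
    (measurable_mixDensity hμm hνm).comp measurable_prodMk_left
  have hqyx : Measurable fun z : X × X => q z.2 z.1 := hqm.comp measurable_swap
  have hP : Measurable fun z : X × X =>
      ENNReal.ofReal (proposalSensitivity V q g' pρ pμ pν t z.1 z.2) := by
    have hrest : Measurable fun z : X × X =>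
        (V z.2 + V z.1) * (pρ z.1 / mixDensity pμ pν t z.1) * q z.2 z.1 := by fun_prop
    exact ((hrest.mul hr).div (hVm.comp measurable_snd)).ennreal_ofReal
  simp only [meanValueIntegrand_eq_add hV1 hq hg'0 hρ0 hμ hν ht]
  exact (lintegral_lintegral_add_le_mul hW (fun _ => ENNReal.ofReal_ne_top) hP).trans_eq
    (mul_comm _ _)

lemma ofReal_abs_integral_hastingsKernelFun_sub_le [SFinite lam] {g g' : ℝ → ℝ}
    (hg : ∀ u, 0 < u → HasDerivAt g (g' u) u) (hg'c : ContinuousOn g' (Ioi 0))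
    (hg'0 : ∀ u, 0 < u → 0 ≤ g' u) (hg0 : ∀ u, 0 < u → 0 ≤ g u) (hg1 : ∀ u, 0 < u → g u ≤ 1)
    (hgu : ∀ u, 0 < u → g u ≤ u) {q : X → X → ℝ} (hqm : Measurable (Function.uncurry q))
    (hq : ∀ x y, 0 < q x y) {cq : ℝ} (hcq : ∀ x y, q x y ≤ cq)
    (hqint : ∀ x, ∫ y, q x y ∂lam = 1) {V : X → ℝ} (hV1 : ∀ w, 1 ≤ V w) {pμ pν pρ : X → ℝ}
    (hμm : Measurable pμ) (hμ : ∀ w, 0 < pμ w) {cμ : ℝ} (hcμ : ∀ w, pμ w ≤ cμ)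
    (hVμ : Integrable (fun w => V w * pμ w) lam) (hνm : Measurable pν) (hν : ∀ w, 0 < pν w)
    {cν : ℝ} (hcν : ∀ w, pν w ≤ cν) (hVν : Integrable (fun w => V w * pν w) lam)
    (hρm : Measurable pρ) (hρ0 : ∀ w, 0 ≤ pρ w) {cρμ cρν : ℝ}
    (hρμ : ∀ w, pρ w ≤ cρμ * pμ w ^ 2) (hρν : ∀ w, pρ w ≤ cρν * pν w ^ 2) {f : X → ℝ}
    (hf : Measurable f) (hfV : ∀ y, |f y| ≤ V y) :
    ENNReal.ofReal |(∫ x, hastingsKernelFun lam g q pμ x f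
          ∂(lam.withDensity fun x => ENNReal.ofReal (pρ x)))
        - ∫ x, hastingsKernelFun lam g q pν x f
          ∂(lam.withDensity fun x => ENNReal.ofReal (pρ x))|
      ≤ ∫⁻ x, ∫⁻ y, ∫⁻ t in Icc (0 : ℝ) 1, meanValueIntegrand V q g' pρ pμ pν t x y
          ∂volume ∂lam ∂lam := by
  have hgc : ContinuousOn g (Ioi 0) := fun u hu => (hg u hu).continuousAt.continuousWithinAt
  have h1V : ∀ y, |(fun _ => (1 : ℝ)) y| ≤ V y := fun y => by simpa using hV1 y
  have hacc : ∀ {p : X → ℝ}, Measurable p → (∀ w, 0 < p w) →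
      Integrable (fun w => V w * p w) lam → ∀ x,
      Integrable (fun y => g (hastingsRatio q p x y) * q x y) lam := fun hpm hp hVp x => by
    simpa using integrable_mul_g_hastingsRatio_mul hgc hg0 hgu hqm hq hcq hpm hp hVp
      measurable_const h1V x
  have hfacc : ∀ {p : X → ℝ}, Measurable p → (∀ w, 0 < p w) →
      Integrable (fun w => V w * p w) lam → ∀ x,
      Integrable (fun y => f y * g (hastingsRatio q p x y) * q x y) lam := fun hpm hp hVp x =>
    integrable_mul_g_hastingsRatio_mul hgc hg0 hgu hqm hq hcq hpm hp hVp hf hfV x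
  refine (ofReal_abs_integral_sub_le_lintegral hρm hρ0
    (integrable_mul_hastingsKernelFun hgc hg0 hg1 hgu hqm hq hcq hqint hμm hμ hcμ hV1 hVμ hρm
      hρ0 hρμ hf hfV)
    (integrable_mul_hastingsKernelFun hgc hg0 hg1 hgu hqm hq hcq hqint hνm hν hcν hV1 hVν hρm
      hρ0 hρν hf hfV)).trans (lintegral_mono fun x => ?_)
  calc ENNReal.ofReal (pρ x) * ENNReal.ofReal
        |hastingsKernelFun lam g q pμ x f - hastingsKernelFun lam g q pν x f|
      ≤ ENNReal.ofReal (pρ x) * ∫⁻ y, ENNReal.ofReal ((V y + V x) * q x y)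
          * ENNReal.ofReal |g (hastingsRatio q pν x y) - g (hastingsRatio q pμ x y)| ∂lam := by
        gcongr
        exact ofReal_abs_hastingsKernelFun_sub_le hq hfV (hfacc hμm hμ hVμ x)
          (hfacc hνm hν hVν x) (hacc hμm hμ hVμ x) (hacc hνm hν hVν x)
    _ ≤ ENNReal.ofReal (pρ x) * ∫⁻ y, ENNReal.ofReal ((V y + V x) * q x y)
          * ∫⁻ t in Icc (0 : ℝ) 1, ENNReal.ofReal (g' (hastingsRatio q (mixDensity pμ pν t) x y)
            * ratioSlopeBound q pμ pν t x y) ∂volume ∂lam := by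
        gcongr with y
        exact ofReal_abs_sub_le_setLIntegral_ratioSlopeBound hg hg'c hg'0 hq hμ hν x y
    _ = ∫⁻ y, ∫⁻ t in Icc (0 : ℝ) 1, meanValueIntegrand V q g' pρ pμ pν t x y ∂volume ∂lam := by
        rw [← lintegral_const_mul' _ _ ENNReal.ofReal_ne_top]
        refine lintegral_congr fun y => ?_
        rw [← lintegral_const_mul' _ _ ENNReal.ofReal_ne_top,
          ← lintegral_const_mul' _ _ ENNReal.ofReal_ne_top]
        rfl

end Bound

theorem stmt_8_general {X : Type*} [MeasurableSpace X]
    (lam : Measure X) [SigmaFinite lam]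
    (V : X → ℝ) (hVm : Measurable V) (hV1 : ∀ x, 1 ≤ V x)
    (g g' g'' : ℝ → ℝ)
    (hgpos : ∀ u : ℝ, 0 < u → 0 < g u ∧ g u ≤ 1)
    (hgbal : ∀ u : ℝ, 0 < u → g u = u * g (1 / u))
    (hgmono : MonotoneOn g (Set.Ioi 0))
    (hg' : ∀ u : ℝ, 0 < u → HasDerivAt g (g' u) u)
    (hg'' : ∀ u : ℝ, 0 < u → HasDerivAt g' (g'' u) u)
    (q : X → X → ℝ) (hqm : Measurable (Function.uncurry q))
    (hqpos : ∀ x y, 0 < q x y) (hqb : ∃ c, ∀ x y, q x y ≤ c)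
    (hqint : ∀ x, ∫ y, q x y ∂lam = 1)
    (pμ pν : X → ℝ) (hpμm : Measurable pμ) (hpνm : Measurable pν)
    (hpμpos : ∀ x, 0 < pμ x) (hpνpos : ∀ x, 0 < pν x)
    (hpμb : ∃ c, ∀ x, pμ x ≤ c) (hpνb : ∃ c, ∀ x, pν x ≤ c)
    (hVμ : Integrable (fun x => V x * pμ x) lam)
    (hVν : Integrable (fun x => V x * pν x) lam)
    (pρ : X → ℝ) (hpρm : Measurable pρ) (hpρ0 : ∀ x, 0 ≤ pρ x)
    (hρμ : ∃ c, ∀ x, pρ x ≤ c * pμ x ^ 2)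
    (hρν : ∃ c, ∀ x, pρ x ≤ c * pν x ^ 2) :
    ∀ f : X → ℝ, Measurable f → (∀ x, |f x| ≤ V x) →
      ENNReal.ofReal
          |(∫ x, hastingsKernelFun lam g q pμ x f
              ∂(lam.withDensity fun x => ENNReal.ofReal (pρ x)))
            - ∫ x, hastingsKernelFun lam g q pν x f
                ∂(lam.withDensity fun x => ENNReal.ofReal (pρ x))|
        ≤ (∫⁻ t in Set.Icc (0 : ℝ) 1,
              ((∫⁻ z, ⨆ y, ENNReal.ofReal
                  ((V y + V z) * (pρ z / ((1 - t) * pμ z + t * pν z)) * q y z *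
                    g' (hastingsRatio q (fun w => (1 - t) * pμ w + t * pν w) z y) / V y)
                ∂lam)
              + ∫⁻ z, ⨆ y, ENNReal.ofReal
                  ((V y + V z) * ((1 - t) * pμ z + t * pν z) * q z y *
                    g' (hastingsRatio q (fun w => (1 - t) * pμ w + t * pν w) y z) * pρ y /
                      (((1 - t) * pμ y + t * pν y) ^ 2 * V y))
                ∂lam))
          * vDistE V (lam.withDensity fun x => ENNReal.ofReal (pμ x))
              (lam.withDensity fun x => ENNReal.ofReal (pν x)) := by
  intro f hf hfV
  obtain ⟨cq, hcq⟩ := hqb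
  obtain ⟨cμ, hcμ⟩ := hpμb
  obtain ⟨cν, hcν⟩ := hpνb
  obtain ⟨cρμ, hρμ⟩ := hρμ
  obtain ⟨cρν, hρν⟩ := hρν
  have hg0 : ∀ u, 0 < u → 0 ≤ g u := fun u hu => (hgpos u hu).1.le
  have hg1 : ∀ u, 0 < u → g u ≤ 1 := fun u hu => (hgpos u hu).2
  have hg'c : ContinuousOn g' (Ioi 0) := fun u hu => (hg'' u hu).continuousAt.continuousWithinAt
  have hg'0 : ∀ u, 0 < u → 0 ≤ g' u := fun u hu => by
    rw [← (hg' u hu).deriv, ← derivWithin_of_isOpen isOpen_Ioi hu]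
    exact hgmono.derivWithin_nonneg
  have hV0 : ∀ w, 0 ≤ V w := fun w => zero_le_one.trans (hV1 w)
  have hμ0 : ∀ w, 0 ≤ pμ w := fun w => (hpμpos w).le
  have hν0 : ∀ w, 0 ≤ pν w := fun w => (hpνpos w).le
  refine (ofReal_abs_integral_hastingsKernelFun_sub_le hg' hg'c hg'0 hg0 hg1
    (fun u hu => le_self_of_balancing hg1 hgbal hu) hqm hqpos hcq hqint hV1 hpμm hpμpos hcμ hVμ
    hpνm hpνpos hcν hVν hpρm hpρ0 hρμ hρν hf hfV).trans ?_
  -- `g'` need not be measurable, but on `(0, ∞)` it agrees with the measurable `deriv g`.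
  rw [lintegral_lintegral_setLIntegral_swap_of_eqOn measurableSet_Icc
    (measurable_meanValueIntegrand hVm hqm (measurable_deriv g) hpρm hpμm hpνm)
    fun t ht => meanValueIntegrand_congr (fun u hu => (hg' u hu).deriv.symm) hqpos hpμpos hpνpos ht]
  refine (setLIntegral_mono' measurableSet_Icc fun t ht =>
    lintegral_lintegral_meanValueIntegrand_le hVm hV1 hqm hqpos hg'c hg'0 hpρm hpρ0 hpμm hpμpos
      hpνm hpνpos ht).trans ?_
  rw [lintegral_mul_const' _ _
    (integrable_mul_abs_sub hVm hV0 hpμm hμ0 hpνm hν0 hVμ hVν).lintegral_lt_top.ne]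
  exact mul_le_mul_right (lintegral_mul_abs_sub_le_vDistE hVm hV0 hpμm hμ0 hpνm hν0 hVμ hVν) _

/-- **Mean value inequality for Hastings kernels (density case):**
for every measurable `f` with `‖f‖_V ≤ 1`,
`|P_μ(ρ,f) - P_ν(ρ,f)| ≤ M_ρ ‖μ - ν‖_V`, where
`M_ρ = ∫_0^1 { ∫ sup_y [(V(y)+V(z)) (pρ(z)/p_t(z)) q(y,z) g'(r_{μ_t}(z,y)) / V(y)] λ(dz)
  + ∫ sup_y [(V(y)+V(z)) p_t(z) q(z,y) g'(r_{μ_t}(y,z)) pρ(y) / (p_t(y)² V(y))] λ(dz) } dt`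
and `p_t = (1-t) pμ + t pν`. -/
theorem stmt_8 {X : Type*} [MeasurableSpace X]
    (lam : Measure X) [SigmaFinite lam]
    (V : X → ℝ) (hVm : Measurable V) (hV1 : ∀ x, 1 ≤ V x)
    (g g' g'' : ℝ → ℝ)
    (hgpos : ∀ u : ℝ, 0 < u → 0 < g u ∧ g u ≤ 1)
    (hgbal : ∀ u : ℝ, 0 < u → g u = u * g (1 / u))
    (hgmono : MonotoneOn g (Set.Ioi 0))
    (hg' : ∀ u : ℝ, 0 < u → HasDerivAt g (g' u) u)
    (hg'' : ∀ u : ℝ, 0 < u → HasDerivAt g' (g'' u) u)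
    (hg'b : ∃ c, ∀ u : ℝ, 0 < u → |g' u| ≤ c)
    (hg''b : ∃ c, ∀ u : ℝ, 0 < u → |g'' u| ≤ c)
    (q : X → X → ℝ) (hqm : Measurable (Function.uncurry q))
    (hqpos : ∀ x y, 0 < q x y) (hqb : ∃ c, ∀ x y, q x y ≤ c)
    (hqint : ∀ x, ∫ y, q x y ∂lam = 1)
    (pμ pν : X → ℝ) (hpμm : Measurable pμ) (hpνm : Measurable pν)
    (hpμpos : ∀ x, 0 < pμ x) (hpνpos : ∀ x, 0 < pν x)
    (hpμb : ∃ c, ∀ x, pμ x ≤ c) (hpνb : ∃ c, ∀ x, pν x ≤ c)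
    (hμprob : IsProbabilityMeasure (lam.withDensity fun x => ENNReal.ofReal (pμ x)))
    (hνprob : IsProbabilityMeasure (lam.withDensity fun x => ENNReal.ofReal (pν x)))
    (hVμ : Integrable (fun x => V x * pμ x) lam)
    (hVν : Integrable (fun x => V x * pν x) lam)
    (pρ : X → ℝ) (hpρm : Measurable pρ) (hpρ0 : ∀ x, 0 ≤ pρ x)
    (hρprob : IsProbabilityMeasure (lam.withDensity fun x => ENNReal.ofReal (pρ x)))
    (hρμ : ∃ c, ∀ x, pρ x ≤ c * pμ x ^ 2)
    (hρν : ∃ c, ∀ x, pρ x ≤ c * pν x ^ 2) :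
    ∀ f : X → ℝ, Measurable f → (∀ x, |f x| ≤ V x) →
      ENNReal.ofReal
          |(∫ x, hastingsKernelFun lam g q pμ x f
              ∂(lam.withDensity fun x => ENNReal.ofReal (pρ x)))
            - ∫ x, hastingsKernelFun lam g q pν x f
                ∂(lam.withDensity fun x => ENNReal.ofReal (pρ x))|
        ≤ (∫⁻ t in Set.Icc (0 : ℝ) 1,
              ((∫⁻ z, ⨆ y, ENNReal.ofReal
                  ((V y + V z) * (pρ z / ((1 - t) * pμ z + t * pν z)) * q y z *
                    g' (hastingsRatio q (fun w => (1 - t) * pμ w + t * pν w) z y) / V y)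
                ∂lam)
              + ∫⁻ z, ⨆ y, ENNReal.ofReal
                  ((V y + V z) * ((1 - t) * pμ z + t * pν z) * q z y *
                    g' (hastingsRatio q (fun w => (1 - t) * pμ w + t * pν w) y z) * pρ y /
                      (((1 - t) * pμ y + t * pν y) ^ 2 * V y))
                ∂lam))
          * vDistE V (lam.withDensity fun x => ENNReal.ofReal (pμ x))
              (lam.withDensity fun x => ENNReal.ofReal (pν x)) :=
  stmt_8_general lam V hVm hV1 g g' g'' hgpos hgbal hgmono hg' hg'' q hqm hqpos hqb hqint pμ pν hpμm
    hpνm hpμpos hpνpos hpμb hpνb hVμ hVν pρ hpρm hpρ0 hρμ hρν
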